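/- Estimation distance lower bound (Lemma B.1): Let ζ* ∈ (0,1] and γ* ∈ (0,1], let ν* = (1−ζ*)δ_0 + ζ*δ_{γ*}, and take noise level σ = 1. Then for every probability measure ν on ℝ with ν((0,∞)) < (1/2)ζ*, one has sup_t |F_ν(t) − F_{ν*}(t)| ≥ 0.01 γ*² ζ*. -/

import Mathlib

open MeasureTheory ProbabilityTheory Set

/-- `Φ_σ`, the CDF of the Gaussian `N(0, σ²)`. -/
noncomputable def gaussCDF (σ t : ℝ) : ℝ :=
  ∫ x in Set.Iic t, Real.exp (-(x ^ 2) / (2 * σ ^ 2)) / (σ * Real.sqrt (2 * Real.pi))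

/-- CDF of the Gaussian location mixture with mixing distribution `ν` and noise level `σ`:
`F_ν(t) = ∫ Φ_σ(t − x) dν(x)`. -/
noncomputable def gmixCDF (σ : ℝ) (ν : Measure ℝ) (t : ℝ) : ℝ :=
  ∫ x, gaussCDF σ (t - x) ∂ν

/-- The two-spike mixing distribution `(1−ζ)δ_0 + ζδ_γ`. -/
noncomputable def twoSpike (ζ γ : ℝ) : Measure ℝ :=
  ENNReal.ofReal (1 - ζ) • Measure.dirac 0 + ENNReal.ofReal ζ • Measure.dirac γ

noncomputable def f0 (x : ℝ) : ℝ := Real.exp (-(1/2) * x^2) / Real.sqrt (2*Real.pi)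

lemma f0_nonneg (x : ℝ) : 0 ≤ f0 x := by
  unfold f0; positivity

lemma integrable_f0 : Integrable f0 := by
  exact (integrable_exp_neg_mul_sq (by norm_num : (0:ℝ) < 1/2)).div_const _

lemma integral_f0 : ∫ x, f0 x = 1 := by
  unfold f0
  rw [integral_div, integral_gaussian]
  rw [div_eq_one_iff_eq (by positivity)]
  ring

lemma gaussCDF_one (t : ℝ) : gaussCDF 1 t = ∫ x in Iic t, f0 x := by
  unfold gaussCDF f0
  ring
  congr 1; ext x; ring_nf

lemma phi_sub (a b : ℝ) : gaussCDF 1 b - gaussCDF 1 a = ∫ x in a..b, f0 x := by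
  rw [gaussCDF_one, gaussCDF_one]
  exact intervalIntegral.integral_Iic_sub_Iic integrable_f0.integrableOn integrable_f0.integrableOn

lemma phi_nonneg (t : ℝ) : 0 ≤ gaussCDF 1 t := by
  rw [gaussCDF_one]
  exact setIntegral_nonneg measurableSet_Iic (fun x _ => f0_nonneg x)

lemma phi_le_one (t : ℝ) : gaussCDF 1 t ≤ 1 := by
  rw [gaussCDF_one, ← integral_f0]
  exact setIntegral_le_integral integrable_f0 (Filter.Eventually.of_forall f0_nonneg)

lemma f0_even (x : ℝ) : f0 (-x) = f0 x := by unfold f0; ring_nf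

lemma f0_cont : Continuous f0 := by
  unfold f0
  exact (Real.continuous_exp.comp (by continuity)).div_const _

lemma f0_shift_le (x : ℝ) (hx : -(3/2) ≤ x) : f0 (x+3) ≤ f0 x := by
  unfold f0
  have hs : (0:ℝ) < Real.sqrt (2*Real.pi) := Real.sqrt_pos.mpr (by positivity)
  have h : Real.exp (-(1/2)*(x+3)^2) ≤ Real.exp (-(1/2)*x^2) :=
    Real.exp_le_exp.mpr (by nlinarith)
  exact div_le_div_of_nonneg_right h hs.le

-- Chasles difference
lemma chasles_diff (a c : ℝ) :
    (∫ x in a..(a+3), f0 x) - (∫ x in (a+c)..(a+3+c), f0 x)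
      = ∫ x in a..(a+c), (f0 x - f0 (x+3)) := by
  have hI : ∀ u v : ℝ, IntervalIntegrable f0 volume u v :=
    fun u v => integrable_f0.intervalIntegrable
  have h1 : ∫ x in (a+c)..(a+3+c), f0 x = ∫ x in (a+c)..((a+3)+c), f0 x := by ring_nf
  have h2 : ∫ x in a..(a+c), f0 (x+3) = ∫ x in (a+3)..(a+3+c), f0 x := by
    rw [intervalIntegral.integral_comp_add_right]; ring_nf
  have hI3 : ∀ u v : ℝ, IntervalIntegrable (fun x => f0 (x+3)) volume u v :=
    fun u v => (f0_cont.comp (continuous_add_right 3)).intervalIntegrable u v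
  rw [intervalIntegral.integral_sub (hI _ _) (hI3 _ _), h2]
  have h3 : (∫ x in a..(a+c), f0 x) + (∫ x in (a+c)..(a+3+c), f0 x)
      = (∫ x in a..(a+3), f0 x) + (∫ x in (a+3)..(a+3+c), f0 x) := by
    rw [intervalIntegral.integral_add_adjacent_intervals (hI _ _) (hI _ _),
        intervalIntegral.integral_add_adjacent_intervals (hI _ _) (hI _ _)]
  linarith

lemma key_ptw (x : ℝ) (hx1 : -(3/2) ≤ x) (hx2 : x ≤ -(1/2)) :
    3/4 * (Real.exp (-(9/8)) / Real.sqrt (2*Real.pi)) * (x+3/2) ≤ f0 x - f0 (x+3) := by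
  have hs : (0:ℝ) < Real.sqrt (2*Real.pi) := Real.sqrt_pos.mpr (by positivity)
  have hv0 : 0 ≤ x + 3/2 := by linarith
  have hv1 : x + 3/2 ≤ 1 := by linarith
  have hB : Real.exp (-(1/2)*(x+3)^2)
      = Real.exp (-(1/2)*x^2) * Real.exp (-(3*(x+3/2))) := by
    rw [← Real.exp_add]; ring_nf
  have hE0 : Real.exp (-(9/8)) ≤ Real.exp (-(1/2)*x^2) := by
    apply Real.exp_le_exp.mpr; nlinarith
  have he : (0:ℝ) < Real.exp (-(9/8)) := Real.exp_pos _
  have hw0 : (0:ℝ) < Real.exp (-(3*(x+3/2))) := Real.exp_pos _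
  have hw1 : Real.exp (-(3*(x+3/2))) * (1 + 3*(x+3/2)) ≤ 1 := by
    have h := Real.add_one_le_exp (3*(x+3/2))
    have h2 : Real.exp (-(3*(x+3/2))) * Real.exp (3*(x+3/2)) = 1 := by
      rw [← Real.exp_add]; ring_nf; exact Real.exp_zero
    nlinarith
  have hnum : 3/4 * Real.exp (-(9/8)) * (x+3/2)
      ≤ Real.exp (-(1/2)*x^2) - Real.exp (-(1/2)*(x+3)^2) := by
    rw [hB]
    set E := Real.exp (-(1/2)*x^2)
    set w := Real.exp (-(3*(x+3/2)))
    set e := Real.exp (-(9/8))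
    have h1w : (1 - w)*(1 + 3*(x+3/2)) ≥ 3*(x+3/2) := by nlinarith
    have hwle1 : w ≤ 1 := by nlinarith
    have h4 : 3/4 * (x+3/2) ≤ 1 - w := by nlinarith
    calc 3/4 * e * (x+3/2) ≤ e * (1 - w) := by nlinarith
      _ ≤ E * (1 - w) := mul_le_mul_of_nonneg_right hE0 (by linarith)
      _ = E - E * w := by ring
  unfold f0
  calc 3/4 * (Real.exp (-(9/8)) / Real.sqrt (2*Real.pi)) * (x+3/2)
      = (3/4 * Real.exp (-(9/8)) * (x+3/2)) / Real.sqrt (2*Real.pi) := by ring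
    _ ≤ (Real.exp (-(1/2)*x^2) - Real.exp (-(1/2)*(x+3)^2)) / Real.sqrt (2*Real.pi) := by
        gcongr
    _ = _ := by rw [sub_div]

lemma keyK (γ : ℝ) (h0 : 0 < γ) (h1 : γ ≤ 1) :
    3/8 * (Real.exp (-(9/8)) / Real.sqrt (2*Real.pi)) * γ^2
      ≤ (∫ x in (-(3/2) : ℝ)..(3/2), f0 x) - ∫ x in (γ - 3/2)..(γ + 3/2), f0 x := by
  have hch := chasles_diff (-(3/2)) γ
  have e1 : (-(3/2) : ℝ) + 3 = 3/2 := by norm_num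
  have e2 : (-(3/2) : ℝ) + γ = γ - 3/2 := by ring
  have e3 : (3/2 : ℝ) + γ = γ + 3/2 := by ring
  rw [e1, e2, e3] at hch
  rw [hch]
  have hmono : ∫ x in (-(3/2) : ℝ)..(γ - 3/2),
        (3/4 * (Real.exp (-(9/8)) / Real.sqrt (2*Real.pi)) * (x+3/2))
      ≤ ∫ x in (-(3/2) : ℝ)..(γ - 3/2), (f0 x - f0 (x+3)) := by
    apply intervalIntegral.integral_mono_on (by linarith)
    · exact (Continuous.intervalIntegrable (by continuity) _ _)
    · exact ((f0_cont.sub (f0_cont.comp (continuous_add_right 3))).intervalIntegrable _ _)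
    · intro x hx
      exact key_ptw x hx.1 (by linarith [hx.2])
  refine le_trans ?_ hmono
  rw [intervalIntegral.integral_const_mul,
      intervalIntegral.integral_add (intervalIntegral.intervalIntegrable_id) (intervalIntegrable_const),
      integral_id, intervalIntegral.integral_const]
  simp only [smul_eq_mul]
  ring_nf
  nlinarith [Real.sqrt_pos.mpr (mul_pos two_pos Real.pi_pos), Real.exp_pos (-(9/8):ℝ)]

lemma int_center_le (b d : ℝ) (hb : 0 ≤ b) (hd : b ≤ d) :
    ∫ x in (d-3/2)..(d+3/2), f0 x ≤ ∫ x in (b-3/2)..(b+3/2), f0 x := by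
  have h := chasles_diff (b - 3/2) (d - b)
  rw [show b - 3/2 + 3 = b + 3/2 from by ring, show b - 3/2 + (d - b) = d - 3/2 from by ring,
      show b + 3/2 + (d - b) = d + 3/2 from by ring] at h
  have hpos : 0 ≤ ∫ x in (b - 3/2)..(b - 3/2 + (d - b)), (f0 x - f0 (x+3)) := by
    apply intervalIntegral.integral_nonneg (by linarith)
    intro x hx
    exact sub_nonneg.mpr (f0_shift_le x (by have := hx.1; simp at this ⊢; linarith))
  rw [show b - 3/2 + (d - b) = d - 3/2 from by ring] at hpos
  linarith

lemma int_sym (u : ℝ) :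
    ∫ x in (u-3/2)..(u+3/2), f0 x = ∫ x in (-u-3/2)..(-u+3/2), f0 x := by
  have h := intervalIntegral.integral_comp_neg (a := -u-3/2) (b := -u+3/2) f0
  simp only [f0_even] at h
  rw [show -(-u+3/2) = u - 3/2 from by ring, show -(-u-3/2) = u + 3/2 from by ring] at h
  exact h.symm

lemma int_le_peak (u : ℝ) :
    ∫ x in (u-3/2)..(u+3/2), f0 x ≤ ∫ x in ((0:ℝ)-3/2)..((0:ℝ)+3/2), f0 x := by
  rcases le_or_gt 0 u with hu | hu
  · exact int_center_le 0 u le_rfl hu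
  · rw [int_sym]
    exact int_center_le 0 (-u) le_rfl (by linarith)

lemma numC : (0.107:ℝ) ≤ Real.exp (-(9/8)) / Real.sqrt (2*Real.pi) := by
  have hs : Real.sqrt (2*Real.pi) ≤ 2.51 := by
    rw [show (2.51:ℝ) = Real.sqrt (2.51^2) from (Real.sqrt_sq (by norm_num)).symm]
    exact Real.sqrt_le_sqrt (by nlinarith [Real.pi_lt_d2])
  have hs0 : (0:ℝ) < Real.sqrt (2*Real.pi) := Real.sqrt_pos.mpr (by positivity)
  have h18 : Real.exp (1/8) ≤ 8/7 := by
    have ha := Real.add_one_le_exp (-(1/8):ℝ)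
    have hb : Real.exp (-(1/8)) * Real.exp ((1/8):ℝ) = 1 := by
      rw [← Real.exp_add]; norm_num
    nlinarith [Real.exp_pos ((1/8):ℝ), Real.exp_pos (-(1/8):ℝ)]
  have h98 : Real.exp ((9/8):ℝ) ≤ 3.11 := by
    have he : Real.exp ((9/8):ℝ) = Real.exp 1 * Real.exp (1/8) := by
      rw [← Real.exp_add]; norm_num
    have h1 := Real.exp_one_lt_d9
    nlinarith [Real.exp_pos ((1/8):ℝ), Real.exp_pos (1:ℝ)]
  have hinv : (0.3215:ℝ) ≤ Real.exp (-(9/8)) := by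
    rw [Real.exp_neg]
    rw [le_inv_comm₀] <;> try positivity
    · calc Real.exp ((9/8):ℝ) ≤ 3.11 := h98
        _ ≤ (0.3215:ℝ)⁻¹ := by norm_num
  calc (0.107:ℝ) ≤ 0.3215 / 2.51 := by norm_num
    _ ≤ Real.exp (-(9/8)) / Real.sqrt (2*Real.pi) := by
        exact div_le_div₀ (Real.exp_pos _).le hinv hs0 hs

lemma phi_mono : Monotone (gaussCDF 1) := by
  intro a b hab
  have h := phi_sub a b
  have h0 : 0 ≤ ∫ x in a..b, f0 x :=
    intervalIntegral.integral_nonneg hab (fun x _ => f0_nonneg x)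
  linarith

lemma phi_meas : Measurable (gaussCDF 1) := phi_mono.measurable

lemma integrable_phi_shift (ν : Measure ℝ) [IsProbabilityMeasure ν] (t : ℝ) :
    Integrable (fun x => gaussCDF 1 (t - x)) ν := by
  apply Integrable.mono' (integrable_const (1:ℝ))
  · exact (phi_meas.comp (measurable_const.sub measurable_id)).aestronglyMeasurable
  · refine Filter.Eventually.of_forall (fun x => ?_)
    rw [Real.norm_eq_abs, abs_le]
    exact ⟨by linarith [phi_nonneg (t-x)], phi_le_one (t-x)⟩

lemma gmix_twoSpike (ζ γ : ℝ) (h0 : 0 ≤ ζ) (h1 : ζ ≤ 1) (t : ℝ) :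
    gmixCDF 1 (twoSpike ζ γ) t = (1-ζ) * gaussCDF 1 t + ζ * gaussCDF 1 (t - γ) := by
  unfold gmixCDF twoSpike
  have hint : ∀ a : ℝ, Integrable (fun x => gaussCDF 1 (t - x)) (Measure.dirac a) := by
    intro a
    apply Integrable.mono' (integrable_const (1:ℝ))
    · exact (phi_meas.comp (measurable_const.sub measurable_id)).aestronglyMeasurable
    · refine Filter.Eventually.of_forall (fun x => ?_)
      rw [Real.norm_eq_abs, abs_le]
      exact ⟨by linarith [phi_nonneg (t-x)], phi_le_one (t-x)⟩
  rw [integral_add_measure ((hint 0).smul_measure ENNReal.ofReal_ne_top)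
      ((hint γ).smul_measure ENNReal.ofReal_ne_top),
    integral_smul_measure, integral_smul_measure, integral_dirac, integral_dirac,
    ENNReal.toReal_ofReal (by linarith), ENNReal.toReal_ofReal h0]
  simp [smul_eq_mul]

lemma gmix_bounds (ν : Measure ℝ) [IsProbabilityMeasure ν] (t : ℝ) :
    gmixCDF 1 ν t ∈ Set.Icc (0:ℝ) 1 := by
  constructor
  · exact integral_nonneg (fun x => phi_nonneg _)
  · calc gmixCDF 1 ν t ≤ ∫ _x, (1:ℝ) ∂ν :=
        integral_mono (integrable_phi_shift ν t) (integrable_const 1)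
          (fun x => phi_le_one _)
      _ = 1 := by simp


set_option maxHeartbeats 1000000 in
/-- Estimation distance lower bound (Lemma B.1), at unit noise level. -/
theorem estimation_distance_lower_bound
    (ζs γs : ℝ) (hζ : ζs ∈ Set.Ioc (0 : ℝ) 1) (hγ : γs ∈ Set.Ioc (0 : ℝ) 1)
    (ν : Measure ℝ) [IsProbabilityMeasure ν]
    (hν : (ν (Set.Ioi (0 : ℝ))).toReal < 1 / 2 * ζs) :
    (⨆ t : ℝ, |gmixCDF 1 ν t - gmixCDF 1 (twoSpike ζs γs) t|) ≥ 0.01 * γs ^ 2 * ζs := by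
  obtain ⟨hζ0, hζ1⟩ := hζ
  obtain ⟨hγ0, hγ1⟩ := hγ
  set t1 := γs + 3/2 with ht1
  set t2 := γs - 3/2 with ht2
  set g : ℝ → ℝ := fun x => gaussCDF 1 (t1 - x) - gaussCDF 1 (t2 - x) with hg
  have hgint : ∀ x, g x = ∫ y in ((γs - x)-3/2)..((γs - x)+3/2), f0 y := by
    intro x
    have h := phi_sub (t2 - x) (t1 - x)
    rw [show t2 - x = (γs - x) - 3/2 from by rw [ht2]; ring,
        show t1 - x = (γs - x) + 3/2 from by rw [ht1]; ring] at h
    show gaussCDF 1 (t1 - x) - gaussCDF 1 (t2 - x) = _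
    rw [show t1 - x = (γs - x) + 3/2 from by rw [ht1]; ring,
        show t2 - x = (γs - x) - 3/2 from by rw [ht2]; ring]
    exact h
  have hgγ : g γs = ∫ y in (-(3/2):ℝ)..(3/2), f0 y := by
    rw [hgint γs, sub_self]; norm_num
  have hg0 : g 0 = ∫ y in (γs-3/2)..(γs+3/2), f0 y := by
    rw [hgint 0, sub_zero]
  have hx_le_peak : ∀ x, g x ≤ g γs := by
    intro x
    rw [hgint x, hgγ]
    calc  ∫ y in ((γs - x)-3/2)..((γs - x)+3/2), f0 y
        ≤ ∫ y in ((0:ℝ)-3/2)..((0:ℝ)+3/2), f0 y := int_le_peak (γs - x)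
      _ = ∫ y in (-(3/2):ℝ)..(3/2), f0 y := by norm_num
  have hle_g0 : ∀ x ≤ 0, g x ≤ g 0 := by
    intro x hx
    rw [hgint x, hg0]
    exact int_center_le γs (γs - x) hγ0.le (by linarith)
  have hg0_le : g 0 ≤ g γs := hx_le_peak 0
  have hkey : 3/8 * (Real.exp (-(9/8)) / Real.sqrt (2*Real.pi)) * γs^2 ≤ g γs - g 0 := by
    have h := keyK γs hγ0 hγ1
    rw [hgγ, hg0]; linarith
  have hgi : Integrable g ν := (integrable_phi_shift ν t1).sub (integrable_phi_shift ν t2)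
  have hm1 : (ν (Iic (0:ℝ))).toReal = 1 - (ν (Ioi 0)).toReal := by
    rw [← compl_Ioi, prob_compl_eq_one_sub measurableSet_Ioi,
        ENNReal.toReal_sub_of_le prob_le_one ENNReal.one_ne_top, ENNReal.toReal_one]
  have hsplit : ∫ x, g x ∂ν = (∫ x in Iic 0, g x ∂ν) + ∫ x in Ioi 0, g x ∂ν := by
    rw [← integral_add_compl measurableSet_Iic hgi, compl_Iic]
  have hI1 : ∫ x in Iic (0:ℝ), g x ∂ν ≤ (ν (Iic 0)).toReal * g 0 := by
    calc ∫ x in Iic (0:ℝ), g x ∂ν ≤ ∫ _x in Iic (0:ℝ), g 0 ∂ν :=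
        setIntegral_mono_on hgi.integrableOn
          (integrableOn_const (measure_lt_top ν _).ne) measurableSet_Iic
          (fun x hx => hle_g0 x hx)
      _ = (ν (Iic 0)).toReal * g 0 := by rw [setIntegral_const, smul_eq_mul, measureReal_def]
  have hI2 : ∫ x in Ioi (0:ℝ), g x ∂ν ≤ (ν (Ioi 0)).toReal * g γs := by
    calc ∫ x in Ioi (0:ℝ), g x ∂ν ≤ ∫ _x in Ioi (0:ℝ), g γs ∂ν :=
        setIntegral_mono_on hgi.integrableOn
          (integrableOn_const (measure_lt_top ν _).ne) measurableSet_Ioi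
          (fun x _ => hx_le_peak x)
      _ = (ν (Ioi 0)).toReal * g γs := by rw [setIntegral_const, smul_eq_mul, measureReal_def]
  have hνint : ∫ x, g x ∂ν
      ≤ (1 - (ν (Ioi 0)).toReal) * g 0 + (ν (Ioi 0)).toReal * g γs := by
    rw [hsplit]; rw [hm1] at hI1; linarith
  set M := (ν (Ioi (0:ℝ))).toReal with hM
  set G0 := g 0 with hG0
  set Gγ := g γs with hGγ
  set Iν := ∫ x, g x ∂ν with hIν
  have hFν : gmixCDF 1 ν t1 - gmixCDF 1 ν t2 = Iν := by
    rw [hIν]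
    simp only [hg, gmixCDF]
    exact (integral_sub (integrable_phi_shift ν t1) (integrable_phi_shift ν t2)).symm
  have hF2 : gmixCDF 1 (twoSpike ζs γs) t1 - gmixCDF 1 (twoSpike ζs γs) t2
      = (1-ζs) * g 0 + ζs * g γs := by
    rw [gmix_twoSpike _ _ hζ0.le hζ1 t1, gmix_twoSpike _ _ hζ0.le hζ1 t2]
    have hgv : ∀ x, g x = gaussCDF 1 (t1 - x) - gaussCDF 1 (t2 - x) := fun x => rfl
    rw [hgv 0, hgv γs, sub_zero, sub_zero]
    ring
  have hbdd : BddAbove (Set.range fun t => |gmixCDF 1 ν t - gmixCDF 1 (twoSpike ζs γs) t|) := by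
    refine ⟨2, ?_⟩
    rintro y ⟨t, rfl⟩
    have h1 := gmix_bounds ν t
    have h2 : gmixCDF 1 (twoSpike ζs γs) t ∈ Icc (0:ℝ) 1 := by
      rw [gmix_twoSpike _ _ hζ0.le hζ1 t]
      have a1 := phi_nonneg t; have a2 := phi_nonneg (t - γs)
      have b1 := phi_le_one t; have b2 := phi_le_one (t - γs)
      constructor
      · nlinarith
      · nlinarith
    obtain ⟨c1, c2⟩ := h1; obtain ⟨d1, d2⟩ := h2
    rw [abs_le]; constructor <;> linarith
  have hle1 := le_ciSup hbdd t1
  have hle2 := le_ciSup hbdd t2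
  have e : ((1-ζs)*G0 + ζs*Gγ) - Iν
      = (gmixCDF 1 ν t2 - gmixCDF 1 (twoSpike ζs γs) t2)
        - (gmixCDF 1 ν t1 - gmixCDF 1 (twoSpike ζs γs) t1) := by
    rw [← hF2]; rw [← hFν]; ring
  set S := ⨆ t : ℝ, |gmixCDF 1 ν t - gmixCDF 1 (twoSpike ζs γs) t| with hS
  have habs1 := le_abs_self (gmixCDF 1 ν t2 - gmixCDF 1 (twoSpike ζs γs) t2)
  have habs2 := neg_abs_le (gmixCDF 1 ν t1 - gmixCDF 1 (twoSpike ζs γs) t1)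
  have hDle : ((1-ζs)*G0 + ζs*Gγ) - Iν ≤ 2 * S := by
    rw [e]; linarith
  have hDge : (ζs/2) * (Gγ - G0) ≤ ((1-ζs)*G0 + ζs*Gγ) - Iν := by
    have hint := mul_le_mul_of_nonneg_right hν.le (sub_nonneg.mpr hg0_le)
    have hν2 := hνint
    ring_nf at hν2 hint ⊢
    linarith
  have hA1 : (0.107:ℝ) * (3/8) * γs^2 ≤ 3/8 * (Real.exp (-(9/8)) / Real.sqrt (2*Real.pi)) * γs^2 := by
    nlinarith [sq_nonneg γs, numC]
  have hA2 : (0.107:ℝ) * (3/8) * γs^2 ≤ Gγ - G0 := hA1.trans hkey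
  have hA3 : ζs/2 * ((0.107:ℝ) * (3/8) * γs^2) ≤ ζs/2 * (Gγ - G0) :=
    mul_le_mul_of_nonneg_left hA2 (by positivity)
  have h4 : (0:ℝ) ≤ ζs * γs^2 := by positivity
  ring_nf at hDle hDge hA3 h4 ⊢
  linarith
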